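/- On a finite tree endowed with the length measure (i.e., edge lengths λ(e) inducing the tree metric d), the Sobolev transport distance with p = 1 between any two probability measures μ, ν equals the 1-Wasserstein distance: S_1(μ,ν) = W_1(μ,ν), where the ground metric is the tree path metric. -/

import Mathlib

open scoped BigOperators Classical
open Filter

noncomputable section

variable {V : Type*}

/-- The unique path between two vertices of a tree, as a walk. -/
def treePath (G : SimpleGraph V) (hG : G.IsTree) (x y : V) : G.Walk x y :=
  (hG.existsUnique_path x y).exists.choose

section Aux

variable (G : SimpleGraph V) (hG : G.IsTree) (z0 : V)

lemma treePath_isPath (x y : V) : (treePath G hG x y).IsPath :=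
  (hG.existsUnique_path x y).exists.choose_spec

lemma treePath_unique {x y : V} {p : G.Walk x y} (hp : p.IsPath) : p = treePath G hG x y :=
  (hG.existsUnique_path x y).unique hp (treePath_isPath G hG x y)

lemma treePath_self : treePath G hG z0 z0 = SimpleGraph.Walk.nil :=
  (treePath_unique G hG SimpleGraph.Walk.IsPath.nil).symm

lemma treePath_adj {x y : V} (h : G.Adj x y) :
    treePath G hG x y = SimpleGraph.Walk.cons h SimpleGraph.Walk.nil := by
  refine (treePath_unique G hG ?_).symm
  rw [SimpleGraph.Walk.cons_isPath_iff]
  exact ⟨SimpleGraph.Walk.IsPath.nil, by simp [h.ne]⟩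

lemma endpoint_not_mem_takeUntil {a b : V} {p : G.Walk z0 a} (hp : p.IsPath)
    (hb : b ∈ p.support) (hba : b ≠ a) : a ∉ (p.takeUntil b hb).support := by
  intro ha
  have hsplit := p.take_spec hb
  have hnd : p.support.Nodup := hp.support_nodup
  rw [← hsplit, SimpleGraph.Walk.support_append, List.nodup_append] at hnd
  have ha2 : a ∈ (p.dropUntil b hb).support.tail := by
    have := (p.dropUntil b hb).support_eq_cons
    have hend : a ∈ (p.dropUntil b hb).support := SimpleGraph.Walk.end_mem_support _
    rw [this] at hend
    rcases List.mem_cons.1 hend with h | h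
    · exact absurd h.symm hba
    · exact h
  exact hnd.2.2 a ha a ha2 rfl

lemma not_mem_both {a b : V} (h : G.Adj a b)
    (ha : s(a, b) ∈ (treePath G hG z0 a).edges) : s(a, b) ∉ (treePath G hG z0 b).edges := by
  set p := treePath G hG z0 a with hp_def
  have hp : p.IsPath := treePath_isPath G hG z0 a
  have hb : b ∈ p.support := p.snd_mem_support_of_mem_edges ha
  have hq : treePath G hG z0 b = p.takeUntil b hb :=
    (treePath_unique G hG (hp.takeUntil hb)).symm
  rw [hq]
  intro hmem
  have haq : a ∈ (p.takeUntil b hb).support :=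
    SimpleGraph.Walk.fst_mem_support_of_mem_edges _ hmem
  exact endpoint_not_mem_takeUntil G z0 hp hb h.ne' haq

/-- If `b` is on the root path to `a`, then the root path to `a` is the root path to `b`
followed by the edge `b—a`. -/
lemma path_concat_of_mem {a b : V} (h : G.Adj b a)
    (ha : s(a, b) ∈ (treePath G hG z0 a).edges) :
    treePath G hG z0 a = (treePath G hG z0 b).concat h := by
  have hnb : s(a, b) ∉ (treePath G hG z0 b).edges := not_mem_both G hG z0 h.symm ha
  have hna : a ∉ (treePath G hG z0 b).support := by
    intro hmem
    have hq : treePath G hG z0 a = (treePath G hG z0 b).takeUntil a hmem :=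
      (treePath_unique G hG ((treePath_isPath G hG z0 b).takeUntil hmem)).symm
    have : s(a, b) ∈ (treePath G hG z0 b).edges :=
      SimpleGraph.Walk.edges_takeUntil_subset _ hmem (hq ▸ ha)
    exact hnb this
  refine (treePath_unique G hG ?_).symm
  rw [← SimpleGraph.Walk.isPath_reverse_iff, SimpleGraph.Walk.reverse_concat]
  rw [SimpleGraph.Walk.cons_isPath_iff]
  refine ⟨(treePath_isPath G hG z0 b).reverse, ?_⟩
  rwa [SimpleGraph.Walk.support_reverse, List.mem_reverse]

lemma mem_path_of_adj {a b : V} (h : G.Adj a b) :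
    s(a, b) ∈ (treePath G hG z0 a).edges ∨ s(a, b) ∈ (treePath G hG z0 b).edges := by
  by_cases hb : b ∈ (treePath G hG z0 a).support
  · left
    have hq : treePath G hG z0 b = (treePath G hG z0 a).takeUntil b hb :=
      (treePath_unique G hG ((treePath_isPath G hG z0 a).takeUntil hb)).symm
    have hna : a ∉ (treePath G hG z0 b).support := by
      rw [hq]
      exact endpoint_not_mem_takeUntil G z0 (treePath_isPath G hG z0 a) hb h.ne'
    have hpath : treePath G hG z0 a = (treePath G hG z0 b).concat h.symm := by
      refine (treePath_unique G hG ?_).symm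
      rw [← SimpleGraph.Walk.isPath_reverse_iff, SimpleGraph.Walk.reverse_concat,
        SimpleGraph.Walk.cons_isPath_iff]
      refine ⟨(treePath_isPath G hG z0 b).reverse, ?_⟩
      rwa [SimpleGraph.Walk.support_reverse, List.mem_reverse]
    rw [hpath, SimpleGraph.Walk.edges_concat]
    simp [Sym2.eq_swap]
  · right
    have hpath : treePath G hG z0 b = (treePath G hG z0 a).concat h :=
      (treePath_unique G hG (by
        rw [← SimpleGraph.Walk.isPath_reverse_iff, SimpleGraph.Walk.reverse_concat,
          SimpleGraph.Walk.cons_isPath_iff]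
        refine ⟨(treePath_isPath G hG z0 a).reverse, ?_⟩
        rwa [SimpleGraph.Walk.support_reverse, List.mem_reverse])).symm
    rw [hpath, SimpleGraph.Walk.edges_concat]
    simp

lemma exists_far {e : Sym2 V} (he : e ∈ G.edgeSet) :
    ∃ pr : V × V, e = s(pr.1, pr.2) ∧ e ∈ (treePath G hG z0 pr.1).edges ∧
      e ∉ (treePath G hG z0 pr.2).edges := by
  induction e using Sym2.ind with
  | _ a b =>
    have h : G.Adj a b := he
    rcases mem_path_of_adj G hG z0 h with ha | hb
    · exact ⟨(a, b), rfl, ha, not_mem_both G hG z0 h ha⟩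
    · refine ⟨(b, a), Sym2.eq_swap.symm, hb, ?_⟩
      have := not_mem_both G hG z0 h.symm (Sym2.eq_swap ▸ hb)
      rwa [Sym2.eq_swap] at this

/-- For an edge `e` of the tree, the pair (far endpoint, near endpoint) w.r.t. the root. -/
def farPair (e : Sym2 V) : V × V :=
  if h : ∃ pr : V × V, e = s(pr.1, pr.2) ∧ e ∈ (treePath G hG z0 pr.1).edges ∧
      e ∉ (treePath G hG z0 pr.2).edges then h.choose else (z0, z0)

lemma farPair_spec {e : Sym2 V} (he : e ∈ G.edgeSet) :
    e = s((farPair G hG z0 e).1, (farPair G hG z0 e).2) ∧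
      e ∈ (treePath G hG z0 (farPair G hG z0 e).1).edges ∧
      e ∉ (treePath G hG z0 (farPair G hG z0 e).2).edges := by
  rw [farPair, dif_pos (exists_far G hG z0 he)]
  exact (exists_far G hG z0 he).choose_spec

/-- Increment of `f` across edge `e`, oriented away from the root. -/
def inc (f : V → ℝ) (e : Sym2 V) : ℝ :=
  f (farPair G hG z0 e).1 - f (farPair G hG z0 e).2

lemma inc_eq {e : Sym2 V} (he : e ∈ G.edgeSet) (f : V → ℝ) {a b : V}
    (hab : e = s(a, b)) (ha : e ∈ (treePath G hG z0 a).edges)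
    (hb : e ∉ (treePath G hG z0 b).edges) :
    inc G hG z0 f e = f a - f b := by
  subst hab
  obtain ⟨h1, h2, h3⟩ := farPair_spec G hG z0 he
  rcases Sym2.eq_iff.1 h1 with ⟨h4, h5⟩ | ⟨h4, h5⟩
  · simp only [inc, ← h4, ← h5]
  · rw [← h5] at h2
    exact absurd h2 hb

lemma telescope (f : V → ℝ) (v : V) :
    f v - f z0 = (((treePath G hG z0 v).edges).map (inc G hG z0 f)).sum := by
  suffices H : ∀ n v, (treePath G hG z0 v).length = n →
      f v - f z0 = (((treePath G hG z0 v).edges).map (inc G hG z0 f)).sum from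
    H _ v rfl
  intro n
  induction n using Nat.strong_induction_on with
  | _ n IH =>
    intro v hn
    by_cases hv : v = z0
    · subst hv
      rw [treePath_self]
      simp
    · -- decompose the path from the far end
      have hne : v ≠ z0 := hv
      obtain ⟨u, h, q, hq⟩ := SimpleGraph.Walk.exists_eq_cons_of_ne hne
        (treePath G hG z0 v).reverse
      have hp : treePath G hG z0 v = q.reverse.concat h.symm := by
        have := congrArg SimpleGraph.Walk.reverse hq
        rwa [SimpleGraph.Walk.reverse_reverse, SimpleGraph.Walk.reverse_cons] at this
      have hrpath : q.reverse.IsPath := by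
        have := treePath_isPath G hG z0 v
        rw [hp, SimpleGraph.Walk.concat_eq_append] at this
        exact this.of_append_left
      have hqr : q.reverse = treePath G hG z0 u := treePath_unique G hG hrpath
      have hlen : (treePath G hG z0 u).length < n := by
        have h1 : (treePath G hG z0 v).length = q.reverse.length + 1 := by
          rw [hp, SimpleGraph.Walk.length_concat]
        rw [hqr] at h1
        omega
      have IHu : f u - f z0 =
          (((treePath G hG z0 u).edges).map (inc G hG z0 f)).sum :=
        IH _ hlen u rfl
      have hedges : (treePath G hG z0 v).edges
          = (treePath G hG z0 u).edges ++ [s(u, v)] := by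
        rw [hp, SimpleGraph.Walk.edges_concat, hqr, List.concat_eq_append]
      have hein : s(u, v) ∈ (treePath G hG z0 v).edges := by
        rw [hedges]; simp
      have henot : s(u, v) ∉ (treePath G hG z0 u).edges := by
        have hnd : (treePath G hG z0 v).edges.Nodup :=
          (treePath_isPath G hG z0 v).edges_nodup
        rw [hedges, List.nodup_append] at hnd
        intro hmem
        exact hnd.2.2 _ hmem _ (List.mem_singleton_self _) rfl
      have hinc : inc G hG z0 f s(u, v) = f v - f u :=
        inc_eq G hG z0 (G.mem_edgeSet.2 h.symm) f Sym2.eq_swap hein henot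
      rw [hedges, List.map_append, List.sum_append, ← IHu]
      simp only [List.map_cons, List.map_nil, List.sum_cons, List.sum_nil, hinc, add_zero]
      ring

end Aux


/-- Dirac probability measure at `x`, as a function. -/
def dirac [DecidableEq V] (x : V) : V → ℝ := fun v => if v = x then 1 else 0

/-- A probability measure on a finite vertex set, as a function. -/
def IsProb [Fintype V] (mu : V → ℝ) : Prop := (∀ v, 0 ≤ mu v) ∧ ∑ v, mu v = 1

/-- Cut mass `μ(γ_e)`: total μ-mass of vertices `v` such that the edge `e` lies on the
unique path from the root `z0` to `v`. -/
def cutMass [Fintype V] (G : SimpleGraph V) (hG : G.IsTree) (z0 : V)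
    (mu : V → ℝ) (e : Sym2 V) : ℝ :=
  ∑ v : V, if e ∈ (treePath G hG z0 v).edges then mu v else 0

/-- Order-1 Sobolev transport distance on a rooted tree. -/
def S1 [Fintype V] (G : SimpleGraph V) (hG : G.IsTree) (z0 : V) (lam : Sym2 V → ℝ)
    (mu nu : V → ℝ) : ℝ :=
  ∑ e ∈ G.edgeFinset, lam e * |cutMass G hG z0 mu e - cutMass G hG z0 nu e|

/-- Order-p Sobolev transport distance on a rooted tree. -/
def Sp [Fintype V] (G : SimpleGraph V) (hG : G.IsTree) (z0 : V) (lam : Sym2 V → ℝ)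
    (p : ℝ) (mu nu : V → ℝ) : ℝ :=
  (∑ e ∈ G.edgeFinset, lam e * |cutMass G hG z0 mu e - cutMass G hG z0 nu e| ^ p) ^ (1/p)

/-- Tree path metric induced by edge lengths. -/
def treeDist (G : SimpleGraph V) (hG : G.IsTree) (lam : Sym2 V → ℝ) (x y : V) : ℝ :=
  ((treePath G hG x y).edges.map lam).sum

/-- 1-Wasserstein distance via Kantorovich–Rubinstein duality. -/
def W1 [Fintype V] (d : V → V → ℝ) (mu nu : V → ℝ) : ℝ :=
  sSup {s | ∃ f : V → ℝ, (∀ a b, |f a - f b| ≤ d a b) ∧ s = ∑ v, f v * (mu v - nu v)}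

section Aux2

variable (G : SimpleGraph V) (hG : G.IsTree) (z0 : V)

lemma treeDist_adj (lam : Sym2 V → ℝ) {x y : V} (h : G.Adj x y) :
    treeDist G hG lam x y = lam s(x, y) := by
  rw [treeDist, treePath_adj G hG h]
  simp

lemma sum_edges_eq [Fintype V] (g : Sym2 V → ℝ) (v : V) :
    (((treePath G hG z0 v).edges).map g).sum =
      ∑ e ∈ G.edgeFinset, (if e ∈ (treePath G hG z0 v).edges then g e else 0) := by
  classical
  set L := (treePath G hG z0 v).edges with hL
  have hnd : L.Nodup := (treePath_isPath G hG z0 v).edges_nodup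
  have hsub : ∀ e ∈ L, e ∈ G.edgeFinset := fun e he =>
    SimpleGraph.mem_edgeFinset.2 ((treePath G hG z0 v).edges_subset_edgeSet he)
  have hmemiff : ∀ e : Sym2 V, (if e ∈ L then g e else 0) = (if e ∈ L.toFinset then g e else 0) :=
    fun e => by simp
  rw [Finset.sum_congr rfl fun e _ => hmemiff e, Finset.sum_ite_mem]
  have hfilter : G.edgeFinset ∩ L.toFinset = L.toFinset := by
    apply Finset.inter_eq_right.2
    intro e he
    exact hsub e (List.mem_toFinset.1 he)
  rw [hfilter, List.sum_toFinset g hnd]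

lemma key_identity [Fintype V] (f mu nu : V → ℝ) (hsum : ∑ v, mu v = ∑ v, nu v) :
    ∑ v, f v * (mu v - nu v) =
      ∑ e ∈ G.edgeFinset, inc G hG z0 f e * (cutMass G hG z0 mu e - cutMass G hG z0 nu e) := by
  classical
  have h0 : ∑ v, (mu v - nu v) = 0 := by
    rw [Finset.sum_sub_distrib, hsum, sub_self]
  have step1 : ∑ v, (f v - f z0) * (mu v - nu v) = ∑ v, f v * (mu v - nu v) := by
    simp only [sub_mul]
    rw [Finset.sum_sub_distrib, ← Finset.mul_sum, h0, mul_zero, sub_zero]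
  rw [← step1]
  have step2 : ∀ v : V, (f v - f z0) * (mu v - nu v) =
      ∑ e ∈ G.edgeFinset,
        (if e ∈ (treePath G hG z0 v).edges then inc G hG z0 f e else 0) * (mu v - nu v) := by
    intro v
    rw [← Finset.sum_mul, ← sum_edges_eq G hG z0 (inc G hG z0 f) v,
      ← telescope G hG z0 f v]
  rw [Finset.sum_congr rfl fun v _ => step2 v, Finset.sum_comm]
  refine Finset.sum_congr rfl fun e _he => ?_
  rw [cutMass, cutMass, ← Finset.sum_sub_distrib, Finset.mul_sum]
  refine Finset.sum_congr rfl fun v _ => ?_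
  by_cases hev : e ∈ (treePath G hG z0 v).edges <;> simp [hev]

end Aux2

section Aux3

variable (G : SimpleGraph V) (hG : G.IsTree) (z0 : V)

lemma lip_walk (lam : Sym2 V → ℝ) (g : V → ℝ)
    (hg : ∀ a b, G.Adj a b → |g a - g b| ≤ lam s(a, b)) {x y : V} (p : G.Walk x y) :
    |g x - g y| ≤ (p.edges.map lam).sum := by
  induction p with
  | nil => simp
  | @cons u v' y h q ih =>
    rw [SimpleGraph.Walk.edges_cons, List.map_cons, List.sum_cons]
    calc |g u - g y| ≤ |g u - g v'| + |g v' - g y| := abs_sub_le _ _ _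
      _ ≤ lam s(u, v') + (q.edges.map lam).sum := add_le_add (hg u v' h) ih

lemma pathSum_step (w : Sym2 V → ℝ) {a b : V} (h : G.Adj b a)
    (ha : s(a, b) ∈ (treePath G hG z0 a).edges) :
    ((treePath G hG z0 a).edges.map w).sum
      = ((treePath G hG z0 b).edges.map w).sum + w s(b, a) := by
  rw [path_concat_of_mem G hG z0 h ha, SimpleGraph.Walk.edges_concat, List.concat_eq_append,
    List.map_append, List.sum_append]
  simp

end Aux3


/-- On a finite tree with the length measure, the order-1 Sobolev transport distance
coincides with the 1-Wasserstein distance with respect to the tree path metric. -/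
theorem S1_eq_W1 [Fintype V] [DecidableEq V]
    (G : SimpleGraph V) (hG : G.IsTree) (z0 : V) (lam : Sym2 V → ℝ)
    (hlam : ∀ e ∈ G.edgeSet, 0 < lam e) (mu nu : V → ℝ)
    (hmu : IsProb mu) (hnu : IsProb nu) :
    S1 G hG z0 lam mu nu = W1 (treeDist G hG lam) mu nu := by
  classical
  have hsum : ∑ v, mu v = ∑ v, nu v := hmu.2.trans hnu.2.symm
  set Δ : Sym2 V → ℝ := fun e => cutMass G hG z0 mu e - cutMass G hG z0 nu e with hΔ
  -- the optimal potential
  set w : Sym2 V → ℝ := fun e => if Δ e < 0 then -lam e else lam e with hw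
  set F : V → ℝ := fun v => (((treePath G hG z0 v).edges).map w).sum with hF
  have habsw : ∀ e ∈ G.edgeSet, |w e| = lam e := by
    intro e he
    by_cases hneg : Δ e < 0 <;> simp [hw, hneg, abs_of_pos (hlam e he), abs_of_neg, hlam e he,
      abs_of_pos]
  -- adjacency increment of F
  have hFadj : ∀ a b : V, G.Adj a b → |F a - F b| ≤ lam s(a, b) := by
    intro a b h
    rcases mem_path_of_adj G hG z0 h with hmem | hmem
    · have := pathSum_step G hG z0 w h.symm hmem
      have : F a - F b = w s(b, a) := by rw [hF]; simp only; rw [this]; ring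
      rw [this, Sym2.eq_swap] at *
      rw [show s(a,b) = s(b,a) from Sym2.eq_swap] at *
      exact le_of_eq (habsw _ (G.mem_edgeSet.2 h.symm))
    · have hstep := pathSum_step G hG z0 w h (by rwa [Sym2.eq_swap])
      have : F b - F a = w s(a, b) := by rw [hF]; simp only; rw [hstep]; ring
      rw [abs_sub_comm, this]
      exact le_of_eq (habsw _ (G.mem_edgeSet.2 h))
  -- F is 1-Lipschitz for the tree distance
  have hFlip : ∀ a b : V, |F a - F b| ≤ treeDist G hG lam a b :=
    fun a b => lip_walk G lam F hFadj (treePath G hG a b)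
  -- inc of F equals w on tree edges
  have hincF : ∀ e ∈ G.edgeFinset, inc G hG z0 F e = w e := by
    intro e he
    have he' : e ∈ G.edgeSet := SimpleGraph.mem_edgeFinset.1 he
    obtain ⟨h1, h2, h3⟩ := farPair_spec G hG z0 he'
    have hadj : G.Adj (farPair G hG z0 e).1 (farPair G hG z0 e).2 := by
      rw [← SimpleGraph.mem_edgeSet, ← h1]; exact he'
    have hstep := pathSum_step G hG z0 w hadj.symm
      (by rw [← h1]; exact h2)
    have : inc G hG z0 F e = w s((farPair G hG z0 e).2, (farPair G hG z0 e).1) := by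
      rw [inc, hF]; simp only; rw [hstep]; ring
    rw [this, Sym2.eq_swap, ← h1]
  -- the value of F
  have hFval : ∑ v, F v * (mu v - nu v) = S1 G hG z0 lam mu nu := by
    rw [key_identity G hG z0 F mu nu hsum, S1]
    refine Finset.sum_congr rfl fun e he => ?_
    rw [hincF e he]
    by_cases hneg : Δ e < 0
    · simp only [hw, hΔ] at hneg ⊢; rw [if_pos hneg]
      rw [abs_of_neg hneg]; ring
    · simp only [hw, hΔ] at hneg ⊢; rw [if_neg hneg]
      rw [abs_of_nonneg (not_lt.1 hneg)]
  -- upper bound for every admissible potential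
  have hupper : ∀ s ∈ {s | ∃ f : V → ℝ, (∀ a b, |f a - f b| ≤ treeDist G hG lam a b) ∧
      s = ∑ v, f v * (mu v - nu v)}, s ≤ S1 G hG z0 lam mu nu := by
    rintro s ⟨f, hf, rfl⟩
    rw [key_identity G hG z0 f mu nu hsum, S1]
    refine Finset.sum_le_sum fun e he => ?_
    have he' : e ∈ G.edgeSet := SimpleGraph.mem_edgeFinset.1 he
    obtain ⟨h1, h2, h3⟩ := farPair_spec G hG z0 he'
    have hadj : G.Adj (farPair G hG z0 e).1 (farPair G hG z0 e).2 := by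
      rw [← SimpleGraph.mem_edgeSet, ← h1]; exact he'
    have hbound : |inc G hG z0 f e| ≤ lam e := by
      rw [inc]
      calc |f (farPair G hG z0 e).1 - f (farPair G hG z0 e).2|
          ≤ treeDist G hG lam (farPair G hG z0 e).1 (farPair G hG z0 e).2 := hf _ _
        _ = lam e := by rw [treeDist_adj G hG lam hadj, ← h1]
    calc inc G hG z0 f e * Δ e ≤ |inc G hG z0 f e * Δ e| := le_abs_self _
      _ = |inc G hG z0 f e| * |Δ e| := abs_mul _ _
      _ ≤ lam e * |Δ e| := mul_le_mul_of_nonneg_right hbound (abs_nonneg _)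
  -- conclude
  rw [W1]
  refine le_antisymm ?_ (csSup_le ⟨_, ⟨F, hFlip, rfl⟩⟩ hupper)
  exact le_csSup ⟨_, hupper⟩ ⟨F, hFlip, hFval.symm⟩


end
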